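/- arXiv:1512.04260 — 6 statements merged into one kernel-verified Lean document; each statement's English description precedes it below -/
import Mathlib

section
/- Let P and Q be orthogonal projections on a Hilbert space H with ‖P - Q‖ < 1. Then there exists a unitary U ∈ B(H) such that U* P U = Q and U* (I - P) U = I - Q. -/
open Polynomial in
lemma commute_aeval' {A : Type*} [Ring A] [Algebra ℝ A] {a b : A} (hab : Commute b a)
    (p : ℝ[X]) : Commute b (aeval a p) := by
  induction p using Polynomial.induction_on' with
  | add p q hp hq => rw [map_add]; exact hp.add_right hq
  | monomial n c =>
      rw [Polynomial.aeval_monomial]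
      have h0 : Commute b ((algebraMap ℝ A) c) := (Algebra.commutes c b).symm
      exact h0.mul_right (hab.pow_right n)

open Polynomial in
lemma commute_cfc' {H : Type*} [NormedAddCommGroup H] [InnerProductSpace ℂ H] [CompleteSpace H]
    {a b : H →L[ℂ] H} (ha : IsSelfAdjoint a) (hab : Commute b a) (f : ℝ → ℝ) :
    Commute b (cfc f a) := by
  by_cases hf : ContinuousOn f (spectrum ℝ a)
  · rw [cfc_apply f a ha hf]
    set s := spectrum ℝ a
    suffices hall : ∀ g : C(s, ℝ), Commute b (cfcHom ha g) from hall _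
    intro g
    have hdense : (polynomialFunctions s).topologicalClosure = ⊤ :=
      polynomialFunctions.topologicalClosure s
    have hclosed : IsClosed {g : C(s, ℝ) | Commute b (cfcHom ha g)} := by
      simp only [Commute, SemiconjBy]
      exact isClosed_eq (by fun_prop) (by fun_prop)
    have hsub : (polynomialFunctions s : Set C(s, ℝ)) ⊆ {g | Commute b (cfcHom ha g)} := by
      rw [polynomialFunctions_coe]
      rintro _ ⟨p, rfl⟩
      have h1 : (Polynomial.toContinuousMapOnAlgHom s) p
          = Polynomial.aeval ((Polynomial.toContinuousMapOnAlgHom s) X) p := by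
        conv_lhs => rw [← Polynomial.aeval_X_left_apply p,
          ← Polynomial.aeval_algHom_apply (Polynomial.toContinuousMapOnAlgHom s) X p]
      have hX : (Polynomial.toContinuousMapOnAlgHom s) X
          = ContinuousMap.restrict s (ContinuousMap.id ℝ) := by
        ext x; simp [Polynomial.toContinuousMapOn, Polynomial.toContinuousMap]
      have h2 : cfcHom ha ((Polynomial.toContinuousMapOnAlgHom s) p)
          = Polynomial.aeval a p := by
        rw [h1, hX, ← Polynomial.aeval_algHom_apply (cfcHom ha) _ p, cfcHom_id ha]
      show Commute b (cfcHom ha ((Polynomial.toContinuousMapOnAlgHom s) p))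
      rw [h2]
      exact commute_aeval' hab p
    have hcl : closure (polynomialFunctions s : Set C(s, ℝ)) = Set.univ := by
      have := congrArg (fun (S : Subalgebra ℝ C(s,ℝ)) => (S : Set C(s,ℝ))) hdense
      simpa [Subalgebra.topologicalClosure_coe] using this
    have hmem : g ∈ closure (polynomialFunctions s : Set C(s, ℝ)) := by rw [hcl]; trivial
    exact (closure_minimal hsub hclosed) hmem
  · rw [cfc_apply_of_not_continuousOn a hf]; exact Commute.zero_right b


open scoped Pointwise

/-- A (orthogonal) projection on a Hilbert space: a self-adjoint idempotent
bounded operator. -/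
def IsProjectionOp {H : Type*} [NormedAddCommGroup H] [InnerProductSpace ℂ H]
    [CompleteSpace H] (P : H →L[ℂ] H) : Prop :=
  IsSelfAdjoint P ∧ P * P = P

/-- If `P`, `Q` are orthogonal projections with `‖P - Q‖ < 1`, then there is a
unitary `U` with `U* P U = Q` and `U* (I - P) U = I - Q`. -/
theorem exists_unitary_conj_of_norm_sub_lt_one
    {H : Type*} [NormedAddCommGroup H] [InnerProductSpace ℂ H] [CompleteSpace H]
    (P Q : H →L[ℂ] H) (hP : IsProjectionOp P) (hQ : IsProjectionOp Q)
    (hPQ : ‖P - Q‖ < 1) :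
    ∃ U : H →L[ℂ] H, U * star U = 1 ∧ star U * U = 1 ∧
      star U * P * U = Q ∧ star U * (1 - P) * U = 1 - Q := by
  rcases subsingleton_or_nontrivial H with hH | hH
  · exact ⟨1, Subsingleton.elim _ _, Subsingleton.elim _ _, Subsingleton.elim _ _,
      Subsingleton.elim _ _⟩
  obtain ⟨hP1, hP2⟩ := hP
  obtain ⟨hQ1, hQ2⟩ := hQ
  have hPP : ∀ x : H →L[ℂ] H, P * (P * x) = P * x := fun x => by rw [← mul_assoc, hP2]
  have hQQ : ∀ x : H →L[ℂ] H, Q * (Q * x) = Q * x := fun x => by rw [← mul_assoc, hQ2]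
  set A : H →L[ℂ] H := 1 - (P - Q) * (P - Q) with hA_def
  set W : H →L[ℂ] H := Q * P + (1 - Q) * (1 - P) with hW_def
  have hWst : star W = P * Q + (1 - P) * (1 - Q) := by
    simp [hW_def, star_mul, star_sub, hP1.star_eq, hQ1.star_eq]
  have hA_sa : IsSelfAdjoint A := by
    rw [IsSelfAdjoint, hA_def]
    simp [star_sub, star_mul, hP1.star_eq, hQ1.star_eq, mul_sub, sub_mul]
    abel
  -- word identities
  have hPA : Commute P A := by
    show P * A = A * P
    simp only [hA_def, mul_sub, sub_mul, mul_add, add_mul, mul_one, one_mul, mul_assoc,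
      hP2, hQ2, hPP, hQQ]
    abel
  have hQA : Commute Q A := by
    show Q * A = A * Q
    simp only [hA_def, mul_sub, sub_mul, mul_add, add_mul, mul_one, one_mul, mul_assoc,
      hP2, hQ2, hPP, hQQ]
    abel
  have hWA : Commute W A := by
    show W * A = A * W
    simp only [hA_def, hW_def, mul_sub, sub_mul, mul_add, add_mul, mul_one, one_mul, mul_assoc,
      hP2, hQ2, hPP, hQQ]
    abel
  have hWstA : Commute (star W) A := by
    show star W * A = A * star W
    rw [hWst]
    simp only [hA_def, mul_sub, sub_mul, mul_add, add_mul, mul_one, one_mul, mul_assoc,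
      hP2, hQ2, hPP, hQQ]
    abel
  have hWstW : star W * W = A := by
    rw [hWst]
    simp only [hA_def, hW_def, mul_sub, sub_mul, mul_add, add_mul, mul_one, one_mul, mul_assoc,
      hP2, hQ2, hPP, hQQ]
    abel
  have hWWst : W * star W = A := by
    rw [hWst]
    simp only [hA_def, hW_def, mul_sub, sub_mul, mul_add, add_mul, mul_one, one_mul, mul_assoc,
      hP2, hQ2, hPP, hQQ]
    abel
  have hWP : W * P = Q * W := by
    simp only [hW_def, mul_sub, sub_mul, mul_add, add_mul, mul_one, one_mul, mul_assoc,
      hP2, hQ2, hPP, hQQ]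
    abel
  -- spectrum of A
  have hnorm : ‖(P - Q) * (P - Q)‖ < 1 := by
    calc ‖(P - Q) * (P - Q)‖ ≤ ‖P - Q‖ * ‖P - Q‖ := norm_mul_le _ _
    _ < 1 := by nlinarith [norm_nonneg (P - Q)]
  set ε : ℝ := 1 - ‖P - Q‖ * ‖P - Q‖ with hε_def
  have hε_pos : 0 < ε := by nlinarith [norm_nonneg (P - Q)]
  have hspec : ∀ x ∈ spectrum ℝ A, ε ≤ x := by
    intro x hx
    have h1 : spectrum ℝ A = ({(1:ℝ)} : Set ℝ) - spectrum ℝ ((P - Q) * (P - Q)) := by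
      rw [hA_def, show (1 : H →L[ℂ] H) = algebraMap ℝ (H →L[ℂ] H) 1 by simp,
        ← spectrum.singleton_sub_eq]
    rw [h1] at hx
    obtain ⟨o, ho, y, hy, hxy⟩ := hx
    rcases ho with rfl
    have hyn : ‖y‖ ≤ ‖(P - Q) * (P - Q)‖ := spectrum.norm_le_norm_of_mem hy
    have : y ≤ ‖P - Q‖ * ‖P - Q‖ := by
      calc y ≤ |y| := le_abs_self y
      _ = ‖y‖ := rfl
      _ ≤ ‖(P - Q) * (P - Q)‖ := hyn
      _ ≤ ‖P - Q‖ * ‖P - Q‖ := norm_mul_le _ _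
    rw [← hxy]
    simp only [hε_def]
    linarith
  -- the inverse square root of A
  set f : ℝ → ℝ := fun x => (Real.sqrt x)⁻¹ with hf_def
  have hf_cont : ContinuousOn f (spectrum ℝ A) := by
    apply ContinuousOn.inv₀ Real.continuous_sqrt.continuousOn
    intro x hx
    exact (Real.sqrt_pos.mpr (lt_of_lt_of_le hε_pos (hspec x hx))).ne'
  set T : H →L[ℂ] H := cfc f A with hT_def
  have hT_sa : IsSelfAdjoint T := cfc_predicate f A
  have hTTA : T * T * A = 1 := by
    have h1 : cfc (fun x => f x * f x) A = T * T := cfc_mul f f A hf_cont hf_cont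
    have h2 : cfc (fun x => (f x * f x) * x) A
        = cfc (fun x => f x * f x) A * cfc (fun x : ℝ => x) A :=
      cfc_mul _ _ A (by exact (hf_cont.mul hf_cont)) continuousOn_id
    rw [h1, cfc_id' ℝ A] at h2
    rw [← h2]
    rw [cfc_congr (g := fun _ => (1:ℝ)) (fun x hx => ?_), cfc_const_one ℝ A]
    have hx1 : ε ≤ x := hspec x hx
    have hx0 : 0 < x := lt_of_lt_of_le hε_pos hx1
    show f x * f x * x = 1
    simp only [hf_def]
    rw [← mul_inv, Real.mul_self_sqrt hx0.le, inv_mul_cancel₀ hx0.ne']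
  have hTA : Commute T A := (commute_cfc' hA_sa (Commute.refl A) f).symm
  have hTP : Commute T P := (commute_cfc' hA_sa hPA f).symm
  have hTW : Commute T W := (commute_cfc' hA_sa hWA f).symm
  have hTTW : Commute (T * T) W := hTW.mul_left hTW
  have hATT : A * (T * T) = 1 := by
    rw [← mul_assoc, ← hTA.eq, mul_assoc, ← hTA.eq, ← mul_assoc, hTTA]
  refine ⟨T * star W, ?_, ?_, ?_, ?_⟩
  · have hsU : star (T * star W) = W * T := by rw [star_mul, star_star, hT_sa.star_eq]
    rw [hsU]
    calc T * star W * (W * T) = T * (star W * W) * T := by noncomm_ring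
    _ = T * A * T := by rw [hWstW]
    _ = A * (T * T) := by rw [hTA.eq, mul_assoc]
    _ = 1 := hATT
  · have hsU : star (T * star W) = W * T := by rw [star_mul, star_star, hT_sa.star_eq]
    rw [hsU]
    calc W * T * (T * star W) = W * (T * T) * star W := by noncomm_ring
    _ = T * T * W * star W := by rw [hTTW.eq]
    _ = T * T * A := by rw [← hWWst]; noncomm_ring
    _ = 1 := hTTA
  · have hsU : star (T * star W) = W * T := by rw [star_mul, star_star, hT_sa.star_eq]
    rw [hsU]
    calc W * T * P * (T * star W) = W * (T * P) * (T * star W) := by noncomm_ring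
    _ = W * (P * T) * (T * star W) := by rw [hTP.eq]
    _ = (W * P) * (T * T) * star W := by noncomm_ring
    _ = (Q * W) * (T * T) * star W := by rw [hWP]
    _ = Q * (T * T * W) * star W := by rw [hTTW.eq]; noncomm_ring
    _ = Q * (T * T * A) := by rw [← hWWst]; noncomm_ring
    _ = Q := by rw [hTTA, mul_one]
  · have hsU : star (T * star W) = W * T := by rw [star_mul, star_star, hT_sa.star_eq]
    rw [hsU]
    have hQ' : W * T * P * (T * star W) = Q := by
      calc W * T * P * (T * star W) = W * (T * P) * (T * star W) := by noncomm_ring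
      _ = W * (P * T) * (T * star W) := by rw [hTP.eq]
      _ = (W * P) * (T * T) * star W := by noncomm_ring
      _ = (Q * W) * (T * T) * star W := by rw [hWP]
      _ = Q * (T * T * W) * star W := by rw [hTTW.eq]; noncomm_ring
      _ = Q * (T * T * A) := by rw [← hWWst]; noncomm_ring
      _ = Q := by rw [hTTA, mul_one]
    have h1' : W * T * (T * star W) = 1 := by
      calc W * T * (T * star W) = W * (T * T) * star W := by noncomm_ring
      _ = T * T * W * star W := by rw [hTTW.eq]
      _ = T * T * A := by rw [← hWWst]; noncomm_ring
      _ = 1 := hTTA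
    calc W * T * (1 - P) * (T * star W)
        = W * T * (T * star W) - W * T * P * (T * star W) := by noncomm_ring
    _ = 1 - Q := by rw [hQ', h1']
end

section
/- Let A be a unital C*-algebra, a ∈ A, and p, q projections in A such that a is invertible up to (p,q), with (p,q)-inverse b. Then for every c ∈ A with ‖c‖ < ‖b‖⁻¹, the element a + c is invertible up to (p,q), and its (p,q)-inverse b₁ satisfies ‖b₁‖ ≤ ‖b‖/(1 - ‖b‖‖c‖). -/
/-- A projection in a C*-algebra: a self-adjoint idempotent. -/
def IsProjection {A : Type*} [Ring A] [StarRing A] (p : A) : Prop :=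
  star p = p ∧ p * p = p

/-- `b` is a `(p,q)`-inverse of `a`: `b = (1-p)b(1-q)` and
`(1-q)a(1-p)·b = 1-q`, `b·(1-q)a(1-p) = 1-p`. -/
def IsPQInv {A : Type*} [Ring A] (a p q b : A) : Prop :=
  b = (1 - p) * b * (1 - q) ∧ (1 - q) * a * (1 - p) * b = 1 - q ∧
    b * ((1 - q) * a * (1 - p)) = 1 - p

/-- A self-adjoint idempotent in a C*-algebra has norm at most 1. -/
lemma norm_le_one_of_proj {A : Type*} [NormedRing A] [StarRing A] [CStarRing A]
    (e : A) (he1 : star e = e) (he2 : e * e = e) : ‖e‖ ≤ 1 := by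
  have h : ‖e‖ * ‖e‖ = ‖e‖ := by
    calc ‖e‖ * ‖e‖ = ‖star e * e‖ := (CStarRing.norm_star_mul_self).symm
    _ = ‖e‖ := by rw [he1, he2]
  nlinarith [norm_nonneg e]

/-- If `a` is invertible up to `(p,q)` with `(p,q)`-inverse `b`, then for every
`c` with `‖c‖ < ‖b‖⁻¹`, `a + c` is invertible up to `(p,q)`, and its
`(p,q)`-inverse `b₁` satisfies `‖b₁‖ ≤ ‖b‖ / (1 - ‖b‖‖c‖)`. -/
theorem invUpTo_perturbation
    {A : Type*} [NormedRing A] [StarRing A] [CStarRing A] [CompleteSpace A]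
    [NormedAlgebra ℂ A] [StarModule ℂ A]
    (a p q b : A) (hp : IsProjection p) (hq : IsProjection q)
    (hb : IsPQInv a p q b)
    (c : A) (hc : ‖c‖ < ‖b‖⁻¹) :
    ∃ b₁ : A, IsPQInv (a + c) p q b₁ ∧ ‖b₁‖ ≤ ‖b‖ / (1 - ‖b‖ * ‖c‖) := by
  obtain ⟨hb1, hb2, hb3⟩ := hb
  have hbpos : 0 < ‖b‖ := by
    by_contra h
    push_neg at h
    have h0 : ‖b‖ = 0 := le_antisymm h (norm_nonneg b)
    rw [h0] at hc
    simp at hc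
    exact absurd hc (not_lt.mpr (norm_nonneg c))
  have hbc : ‖b‖ * ‖c‖ < 1 := by
    calc ‖b‖ * ‖c‖ < ‖b‖ * ‖b‖⁻¹ := mul_lt_mul_of_pos_left hc hbpos
    _ = 1 := mul_inv_cancel₀ (ne_of_gt hbpos)
  have hA : Nontrivial A := nontrivial_of_ne b 0 (by
    intro h; rw [h, norm_zero] at hbpos; exact lt_irrefl 0 hbpos)
  -- idempotents
  have hpp : ((1 : A) - p) * (1 - p) = 1 - p := by
    calc ((1 : A) - p) * (1 - p) = 1 - p - p + p * p := by noncomm_ring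
    _ = 1 - p := by rw [hp.2]; abel
  have hqq : ((1 : A) - q) * (1 - q) = 1 - q := by
    calc ((1 : A) - q) * (1 - q) = 1 - q - q + q * q := by noncomm_ring
    _ = 1 - q := by rw [hq.2]; abel
  have hbp : ((1 : A) - p) * b = b := by
    conv_lhs => rw [hb1]
    calc ((1 : A) - p) * ((1 - p) * b * (1 - q))
        = ((1 - p) * (1 - p)) * b * (1 - q) := by noncomm_ring
    _ = (1 - p) * b * (1 - q) := by rw [hpp]
    _ = b := hb1.symm
  have hbq : b * ((1 : A) - q) = b := by
    conv_lhs => rw [hb1]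
    calc ((1 : A) - p) * b * (1 - q) * (1 - q)
        = (1 - p) * b * ((1 - q) * (1 - q)) := by noncomm_ring
    _ = (1 - p) * b * (1 - q) := by rw [hqq]
    _ = b := hb1.symm
  -- the perturbed corner element
  have hqc' : ((1 : A) - q) * ((1 - q) * c * (1 - p)) = (1 - q) * c * (1 - p) := by
    calc ((1 : A) - q) * ((1 - q) * c * (1 - p))
        = ((1 - q) * (1 - q)) * c * (1 - p) := by noncomm_ring
    _ = (1 - q) * c * (1 - p) := by rw [hqq]
  have hc'p : ((1 : A) - q) * c * (1 - p) * (1 - p) = (1 - q) * c * (1 - p) := by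
    calc ((1 : A) - q) * c * (1 - p) * (1 - p)
        = (1 - q) * c * ((1 - p) * (1 - p)) := by noncomm_ring
    _ = (1 - q) * c * (1 - p) := by rw [hpp]
  have hnp : ‖(1 : A) - p‖ ≤ 1 := by
    apply norm_le_one_of_proj
    · simp [hp.1]
    · exact hpp
  have hnq : ‖(1 : A) - q‖ ≤ 1 := by
    apply norm_le_one_of_proj
    · simp [hq.1]
    · exact hqq
  have hnc' : ‖((1 : A) - q) * c * (1 - p)‖ ≤ ‖c‖ := by
    calc ‖((1 : A) - q) * c * (1 - p)‖ ≤ ‖(1 - q) * c‖ * ‖(1 : A) - p‖ := norm_mul_le _ _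
    _ ≤ ‖((1 : A) - q) * c‖ * 1 := mul_le_mul_of_nonneg_left hnp (norm_nonneg _)
    _ = ‖((1 : A) - q) * c‖ := mul_one _
    _ ≤ ‖(1 : A) - q‖ * ‖c‖ := norm_mul_le _ _
    _ ≤ 1 * ‖c‖ := mul_le_mul_of_nonneg_right hnq (norm_nonneg _)
    _ = ‖c‖ := one_mul _
  set c' := ((1 : A) - q) * c * (1 - p) with hcdef
  have hnt : ‖b * c'‖ ≤ ‖b‖ * ‖c‖ := by
    calc ‖b * c'‖ ≤ ‖b‖ * ‖c'‖ := norm_mul_le _ _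
    _ ≤ ‖b‖ * ‖c‖ := mul_le_mul_of_nonneg_left hnc' (norm_nonneg _)
  have hnt1 : ‖-(b * c')‖ < 1 := by
    rw [norm_neg]; exact lt_of_le_of_lt hnt hbc
  have hnct : ‖-(c' * b)‖ < 1 := by
    rw [norm_neg]
    calc ‖c' * b‖ ≤ ‖c'‖ * ‖b‖ := norm_mul_le _ _
    _ ≤ ‖c‖ * ‖b‖ := mul_le_mul_of_nonneg_right hnc' (norm_nonneg _)
    _ = ‖b‖ * ‖c‖ := mul_comm _ _
    _ < 1 := hbc
  set u : Aˣ := Units.oneSub (-(b * c')) hnt1 with hu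
  set v : Aˣ := Units.oneSub (-(c' * b)) hnct with hv
  have huval : (u : A) = 1 + b * c' := by
    simp [hu, Units.oneSub, sub_neg_eq_add]
  have hvval : (v : A) = 1 + c' * b := by
    simp [hv, Units.oneSub, sub_neg_eq_add]
  -- intertwining
  have hbv : b * (v : A) = (u : A) * b := by
    rw [huval, hvval]; noncomm_ring
  have hb₁eq : (↑u⁻¹ : A) * b = b * (↑v⁻¹ : A) := by
    calc (↑u⁻¹ : A) * b = (↑u⁻¹ : A) * b * ((v : A) * (↑v⁻¹ : A)) := by
          rw [Units.mul_inv, mul_one]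
    _ = (↑u⁻¹ : A) * (b * (v : A)) * (↑v⁻¹ : A) := by noncomm_ring
    _ = (↑u⁻¹ : A) * ((u : A) * b) * (↑v⁻¹ : A) := by rw [hbv]
    _ = ((↑u⁻¹ : A) * (u : A)) * b * (↑v⁻¹ : A) := by noncomm_ring
    _ = b * (↑v⁻¹ : A) := by rw [Units.inv_mul, one_mul]
  have key : ((1 : A) - q) * (a + c) * (1 - p) = (1 - q) * a * (1 - p) + c' := by
    rw [hcdef]; noncomm_ring
  refine ⟨(↑u⁻¹ : A) * b, ⟨?_, ?_, ?_⟩, ?_⟩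
  · -- corner property
    have h1 : (↑u⁻¹ : A) * b * (1 - q) = (↑u⁻¹ : A) * b := by rw [mul_assoc, hbq]
    have h2 : ((1 : A) - p) * (b * (↑v⁻¹ : A)) = b * (↑v⁻¹ : A) := by
      rw [← mul_assoc, hbp]
    symm
    calc ((1 : A) - p) * ((↑u⁻¹ : A) * b) * (1 - q)
        = ((1 : A) - p) * ((↑u⁻¹ : A) * b * (1 - q)) := by noncomm_ring
    _ = ((1 : A) - p) * ((↑u⁻¹ : A) * b) := by rw [h1]
    _ = ((1 : A) - p) * (b * (↑v⁻¹ : A)) := by rw [hb₁eq]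
    _ = b * (↑v⁻¹ : A) := h2
    _ = (↑u⁻¹ : A) * b := hb₁eq.symm
  · -- right inverse
    rw [key, hb₁eq]
    have h2 : ((1 : A) - q) * (v : A) = (1 - q) + c' * b := by
      calc ((1 : A) - q) * (v : A) = (1 - q) * (1 + c' * b) := by rw [hvval]
      _ = (1 - q) + ((1 - q) * c') * b := by noncomm_ring
      _ = (1 - q) + c' * b := by rw [hcdef, hqc']
    calc ((1 - q) * a * (1 - p) + c') * (b * (↑v⁻¹ : A))
        = ((1 - q) * a * (1 - p) * b + c' * b) * (↑v⁻¹ : A) := by noncomm_ring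
    _ = (((1 : A) - q) + c' * b) * (↑v⁻¹ : A) := by rw [hb2]
    _ = (((1 : A) - q) * (v : A)) * (↑v⁻¹ : A) := by rw [h2]
    _ = ((1 : A) - q) * ((v : A) * (↑v⁻¹ : A)) := by rw [mul_assoc]
    _ = (1 : A) - q := by rw [Units.mul_inv, mul_one]
  · -- left inverse
    rw [key]
    have h2 : (u : A) * ((1 : A) - p) = (1 - p) + b * c' := by
      calc (u : A) * ((1 : A) - p) = (1 + b * c') * (1 - p) := by rw [huval]
      _ = (1 - p) + b * (c' * (1 - p)) := by noncomm_ring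
      _ = (1 - p) + b * c' := by rw [hcdef, hc'p]
    calc (↑u⁻¹ : A) * b * ((1 - q) * a * (1 - p) + c')
        = (↑u⁻¹ : A) * (b * ((1 - q) * a * (1 - p)) + b * c') := by noncomm_ring
    _ = (↑u⁻¹ : A) * (((1 : A) - p) + b * c') := by rw [hb3]
    _ = (↑u⁻¹ : A) * ((u : A) * ((1 : A) - p)) := by rw [h2]
    _ = ((↑u⁻¹ : A) * (u : A)) * ((1 : A) - p) := by rw [mul_assoc]
    _ = (1 : A) - p := by rw [Units.inv_mul, one_mul]
  · -- norm bound
    have hd : (0 : ℝ) < 1 - ‖b‖ * ‖c‖ := by linarith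
    have h3 : (↑u⁻¹ : A) + (b * c') * (↑u⁻¹ : A) = 1 := by
      calc (↑u⁻¹ : A) + (b * c') * (↑u⁻¹ : A)
          = (1 + b * c') * (↑u⁻¹ : A) := by noncomm_ring
      _ = (u : A) * (↑u⁻¹ : A) := by rw [huval]
      _ = 1 := Units.mul_inv u
    have hinv : (↑u⁻¹ : A) = 1 - (b * c') * (↑u⁻¹ : A) := eq_sub_of_add_eq h3
    have hnu : ‖(↑u⁻¹ : A)‖ ≤ 1 + ‖b * c'‖ * ‖(↑u⁻¹ : A)‖ := by
      calc ‖(↑u⁻¹ : A)‖ = ‖1 - (b * c') * (↑u⁻¹ : A)‖ := by rw [← hinv]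
      _ ≤ ‖(1 : A)‖ + ‖(b * c') * (↑u⁻¹ : A)‖ := norm_sub_le _ _
      _ ≤ 1 + ‖b * c'‖ * ‖(↑u⁻¹ : A)‖ := by
          gcongr
          · exact le_of_eq CStarRing.norm_one
          · exact norm_mul_le _ _
    have hnu2 : ‖(↑u⁻¹ : A)‖ ≤ 1 / (1 - ‖b‖ * ‖c‖) := by
      rw [le_div_iff₀ hd]
      nlinarith [norm_nonneg (↑u⁻¹ : A), hnt]
    calc ‖(↑u⁻¹ : A) * b‖ ≤ ‖(↑u⁻¹ : A)‖ * ‖b‖ := norm_mul_le _ _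
    _ ≤ (1 / (1 - ‖b‖ * ‖c‖)) * ‖b‖ :=
        mul_le_mul_of_nonneg_right hnu2 (norm_nonneg _)
    _ = ‖b‖ / (1 - ‖b‖ * ‖c‖) := by ring
end

section
/- Let A be a unital C*-algebra, a ∈ A invertible up to (p,q) with (p,q)-inverse b, and suppose 1-p = r₁ + r₂ and 1-q = s₁ + s₂ are decompositions into orthogonal projections. If a is invertible up to (1-r₁, 1-s₁) and s₂ a r₁ = 0, then a is invertible up to (1-r₂, 1-s₂), with (1-r₂,1-s₂)-inverse r₂ b s₂. -/
/-- `a` is invertible up to `(p,q)`. -/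
def InvUpTo {A : Type*} [Ring A] (a p q : A) : Prop := ∃ b, IsPQInv a p q b

/-- Triangular decomposition lemma: if `a` is invertible up to `(p,q)` with
inverse `b`, `1-p = r₁+r₂`, `1-q = s₁+s₂` (orthogonal decompositions into
projections), `a` is invertible up to `(1-r₁,1-s₁)` and `s₂ a r₁ = 0`, then
`a` is invertible up to `(1-r₂,1-s₂)` with `(1-r₂,1-s₂)`-inverse `r₂ b s₂`. -/
theorem invUpTo_of_decomposition
    {A : Type*} [NormedRing A] [StarRing A] [CStarRing A] [CompleteSpace A]
    [NormedAlgebra ℂ A] [StarModule ℂ A]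
    (a p q b r₁ r₂ s₁ s₂ : A)
    (hp : IsProjection p) (hq : IsProjection q)
    (hr₁ : IsProjection r₁) (hr₂ : IsProjection r₂)
    (hs₁ : IsProjection s₁) (hs₂ : IsProjection s₂)
    (hr : r₁ + r₂ = 1 - p) (hro : r₁ * r₂ = 0)
    (hs : s₁ + s₂ = 1 - q) (hso : s₁ * s₂ = 0)
    (hb : IsPQInv a p q b)
    (h1 : InvUpTo a (1 - r₁) (1 - s₁))
    (h2 : s₂ * a * r₁ = 0) :
    IsPQInv a (1 - r₂) (1 - s₂) (r₂ * b * s₂) := by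
  obtain ⟨hb1, hb2, hb3⟩ := hb
  obtain ⟨c, hc1, hc2, hc3⟩ := h1
  simp only [sub_sub_cancel] at hc1 hc2 hc3
  -- idempotency of 1-p, 1-q
  have hep : (1 - p) * (1 - p) = 1 - p := by
    rw [one_sub_mul, mul_one_sub, hp.2, sub_self, sub_zero]
  have heq : (1 - q) * (1 - q) = 1 - q := by
    rw [one_sub_mul, mul_one_sub, hq.2, sub_self, sub_zero]
  -- reversed orthogonality
  have hr2r1 : r₂ * r₁ = 0 := by
    have h : r₁ * r₁ + r₂ * r₁ + (r₁ * r₂ + r₂ * r₂) = r₁ + r₂ := by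
      rw [← add_mul, ← add_mul, ← mul_add, hr]; exact hep
    rw [hr₁.2, hr₂.2, hro, zero_add] at h
    have e : r₂ * r₁ = (r₁ + r₂ * r₁ + r₂) - (r₁ + r₂) := by abel
    rw [e, h, sub_self]
  have hs2s1 : s₂ * s₁ = 0 := by
    have h : s₁ * s₁ + s₂ * s₁ + (s₁ * s₂ + s₂ * s₂) = s₁ + s₂ := by
      rw [← add_mul, ← add_mul, ← mul_add, hs]; exact heq
    rw [hs₁.2, hs₂.2, hso, zero_add] at h
    have e : s₂ * s₁ = (s₁ + s₂ * s₁ + s₂) - (s₁ + s₂) := by abel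
    rw [e, h, sub_self]
  -- absorption
  have her1 : (1 - p) * r₁ = r₁ := by rw [← hr, add_mul, hr₁.2, hr2r1, add_zero]
  have her2 : (1 - p) * r₂ = r₂ := by rw [← hr, add_mul, hr₂.2, hro, zero_add]
  have hs2f : s₂ * (1 - q) = s₂ := by rw [← hs, mul_add, hs₂.2, hs2s1, zero_add]
  -- key identities
  have k1 : s₂ * ((1 - q) * a * (1 - p)) = s₂ * a * r₂ := by
    rw [← mul_assoc, ← mul_assoc, hs2f, ← hr, mul_add, h2, zero_add]
  have hfar1 : (1 - q) * a * (1 - p) * r₁ = s₁ * a * r₁ := by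
    rw [mul_assoc ((1 - q) * a) (1 - p) r₁, her1, ← hs, add_mul, add_mul, h2, add_zero]
  have k2 : b * (s₁ * a * r₁) = r₁ := by
    have h : b * ((1 - q) * a * (1 - p)) * r₁ = (1 - p) * r₁ := by rw [hb3]
    rw [her1, mul_assoc, hfar1] at h
    exact h
  have hfar2 : (1 - q) * a * (1 - p) * r₂ = s₁ * a * r₂ + s₂ * a * r₂ := by
    rw [mul_assoc ((1 - q) * a) (1 - p) r₂, her2, ← hs, add_mul, add_mul]
  have k3 : b * (s₁ * a * r₂) + b * (s₂ * a * r₂) = r₂ := by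
    have h : b * ((1 - q) * a * (1 - p)) * r₂ = (1 - p) * r₂ := by rw [hb3]
    rw [her2, mul_assoc, hfar2, mul_add] at h
    exact h
  have k4 : r₂ * b * s₁ = 0 := by
    calc r₂ * b * s₁ = r₂ * b * (s₁ * a * r₁ * c) := by rw [hc2]
      _ = r₂ * (b * (s₁ * a * r₁)) * c := by simp only [mul_assoc]
      _ = r₂ * r₁ * c := by rw [k2]
      _ = 0 := by rw [hr2r1, zero_mul]
  have k5 : r₂ * (b * (s₁ * a * r₂)) = 0 := by
    have e : r₂ * (b * (s₁ * a * r₂)) = r₂ * b * s₁ * (a * r₂) := by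
      simp only [mul_assoc]
    rw [e, k4, zero_mul]
  have k6 : r₂ * (b * (s₂ * a * r₂)) = r₂ := by
    have h : r₂ * (b * (s₁ * a * r₂) + b * (s₂ * a * r₂)) = r₂ * r₂ := by rw [k3]
    rw [mul_add, k5, zero_add, hr₂.2] at h
    exact h
  refine ⟨?_, ?_, ?_⟩ <;> simp only [sub_sub_cancel]
  · calc r₂ * b * s₂ = r₂ * (b * s₂) := by rw [mul_assoc]
      _ = (r₂ * r₂) * (b * s₂) := by rw [hr₂.2]
      _ = r₂ * (r₂ * (b * s₂)) := by rw [mul_assoc]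
      _ = r₂ * (r₂ * (b * (s₂ * s₂))) := by rw [hs₂.2]
      _ = r₂ * (r₂ * b * s₂) * s₂ := by simp only [mul_assoc]
  · calc s₂ * a * r₂ * (r₂ * b * s₂)
        = s₂ * a * (r₂ * (r₂ * (b * s₂))) := by simp only [mul_assoc]
      _ = s₂ * a * (r₂ * (b * s₂)) := by
          rw [show r₂ * (r₂ * (b * s₂)) = r₂ * (b * s₂) from by rw [← mul_assoc, hr₂.2]]
      _ = s₂ * a * r₂ * (b * s₂) := by simp only [mul_assoc]
      _ = s₂ * ((1 - q) * a * (1 - p)) * (b * s₂) := by rw [k1]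
      _ = s₂ * ((1 - q) * a * (1 - p) * b) * s₂ := by simp only [mul_assoc]
      _ = s₂ * (1 - q) * s₂ := by rw [hb2]
      _ = s₂ * s₂ := by rw [hs2f]
      _ = s₂ := hs₂.2
  · have e : r₂ * b * s₂ * (s₂ * a * r₂) = r₂ * (b * (s₂ * (s₂ * (a * r₂)))) := by
      simp only [mul_assoc]
    rw [e, show s₂ * (s₂ * (a * r₂)) = s₂ * (a * r₂) from by rw [← mul_assoc, hs₂.2]]
    rw [mul_assoc s₂ a r₂] at k6
    exact k6
end

section
/- Let A be a unital C*-algebra, a ∈ A left invertible up to a projection p (i.e., ∃b, b a (1-p) = 1-p), and r ≤ 1-p a projection. Then there exists a projection s ∈ A Murray–von Neumann equivalent to r with s·(a r) = a r, and s is minimal with this property: any projection s₁ with s₁ a r = a r satisfies s₁ ≥ s. -/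
/-- Murray–von Neumann equivalence of `r` and `s`: there is `v` with
`v v* = r` and `v* v = s`. -/
def MvNEquiv {A : Type*} [Ring A] [StarRing A] (r s : A) : Prop :=
  ∃ v : A, v * star v = r ∧ star v * v = s

/-!
Put `x = a r` and `c = r b`, so that `c x = r` and `x r = x`. Then
`r = x* c* c x ≤ ‖c* c‖ x* x`, so `x* x` is invertible in the corner `r A r`, i.e.
`d = x* x + (1 - r)` is invertible. With `h = d^(-1/2)`, which commutes with `r`, the
partial isometry `v = h x*` has `v v* = h x* x h = r`, and `s = v* v = x h² x*` satisfies
`s x = x`. Since `s` has the form `x w`, every `s₁` fixing `x` fixes `s`.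
-/

open CFC

lemma isProjection_iff_isStarProjection {A : Type*} [Ring A] [StarRing A] {p : A} :
    IsProjection p ↔ IsStarProjection p :=
  ⟨fun ⟨hs, hi⟩ => ⟨hi, hs⟩, fun ⟨hi, hs⟩ => ⟨hs, hi⟩⟩

section StarRing

variable {A : Type*} [Ring A] [StarRing A] {r x h : A}

lemma star_mul_self_add_one_sub_mul (hr : IsStarProjection r) (hxr : x * r = x) :
    (star x * x + (1 - r)) * r = star x * x := by
  rw [add_mul, mul_assoc, hxr, hr.one_sub_mul_self, add_zero]

lemma commute_star_mul_self_add_one_sub (hr : IsStarProjection r) (hxr : x * r = x) :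
    Commute (star x * x + (1 - r)) r := by
  have hrx : r * star x = star x := by
    simpa [star_mul, hr.isSelfAdjoint.star_eq] using congr(star $hxr)
  rw [Commute, SemiconjBy, star_mul_self_add_one_sub_mul hr hxr, mul_add, ← mul_assoc, hrx,
    hr.mul_one_sub_self, add_zero]

theorem isStarProjection_mvnEquiv_of_conjugate_eq_one (hr : IsStarProjection r)
    (hxr : x * r = x) (hh : IsSelfAdjoint h) (hhr : Commute h r)
    (hhd : Commute h (star x * x + (1 - r))) (hinv : h * (star x * x + (1 - r)) * h = 1) :
    IsStarProjection (x * (h * h) * star x) ∧ MvNEquiv r (x * (h * h) * star x) ∧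
      x * (h * h) * star x * x = x := by
  have hd := star_mul_self_add_one_sub_mul hr hxr
  have hsq : h * h * (star x * x) = r := by
    rw [← hd, ← mul_assoc, mul_assoc h, hhd.eq, ← mul_assoc, hinv, one_mul]
  have hconj : h * (star x * x) * h = r := by
    rw [← hd, mul_assoc h, mul_assoc _ r h, ← hhr.eq, ← mul_assoc, ← mul_assoc, hinv, one_mul]
  have hfix : x * (h * h) * star x * x = x := by
    rw [mul_assoc _ (star x), mul_assoc x, hsq, hxr]
  have hstar : star (h * star x) = x * h := by rw [star_mul, star_star, hh.star_eq]
  refine ⟨⟨?_, ?_⟩, ⟨h * star x, ?_, ?_⟩, hfix⟩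
  · calc x * (h * h) * star x * (x * (h * h) * star x)
        = x * (h * h) * star x * x * (h * h) * star x := by simp only [mul_assoc]
      _ = x * (h * h) * star x := by rw [hfix]
  · simp only [IsSelfAdjoint, star_mul, star_star, hh.star_eq, mul_assoc]
  · rw [hstar, ← hconj]
    simp only [mul_assoc]
  · rw [hstar]
    simp only [mul_assoc]

end StarRing

section CStarAlgebra

variable {A : Type*} [CStarAlgebra A] {c x r : A}

lemma isStrictlyPositive_star_mul_self_add_one_sub [PartialOrder A] [StarOrderedRing A]
    (hr : IsStarProjection r) (hcx : c * x = r) :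
    IsStrictlyPositive (star x * x + (1 - r)) := by
  set K : ℝ := ‖star c * c‖ + 1
  have hK : 0 < K := by positivity
  have hr_le : r ≤ K • (star x * x) := calc
    r = star r * r := by rw [hr.isSelfAdjoint.star_eq, hr.isIdempotentElem.eq]
    _ = star x * (star c * c) * x := by rw [← hcx, star_mul]; simp only [mul_assoc]
    _ ≤ ‖star c * c‖ • (star x * x) := CStarAlgebra.star_left_conjugate_le_norm_smul
    _ ≤ K • (star x * x) :=
      smul_le_smul_of_nonneg_right (by simp [K]) (star_mul_self_nonneg x)
  have hr_le' : K⁻¹ • r ≤ star x * x := by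
    simpa [smul_smul, hK.ne'] using smul_le_smul_of_nonneg_left hr_le (inv_nonneg.mpr hK.le)
  have hone_sub_le : K⁻¹ • (1 - r) ≤ 1 - r := by
    nth_rw 2 [← one_smul ℝ (1 - r)]
    exact smul_le_smul_of_nonneg_right (inv_le_one_of_one_le₀ (by simp [K]))
      hr.one_sub.nonneg
  refine (isStrictlyPositive_algebraMap (inv_pos.mpr hK)).of_le ?_
  calc algebraMap ℝ A K⁻¹ = K⁻¹ • r + K⁻¹ • (1 - r) := by
        rw [← smul_add, add_sub_cancel, Algebra.algebraMap_eq_smul_one]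
    _ ≤ star x * x + (1 - r) := add_le_add hr_le' hone_sub_le

theorem exists_minimal_mvnEquiv_of_mul_eq (hr : IsStarProjection r) (hcx : c * x = r)
    (hxr : x * r = x) :
    ∃ s, IsStarProjection s ∧ MvNEquiv r s ∧ s * x = x ∧ ∀ s₁, s₁ * x = x → s₁ * s = s := by
  let := CStarAlgebra.spectralOrder A
  let := CStarAlgebra.spectralOrderedRing A
  set d := star x * x + (1 - r)
  have hd : IsStrictlyPositive d := isStrictlyPositive_star_mul_self_add_one_sub hr hcx
  obtain ⟨hs, hrs, hsx⟩ := isStarProjection_mvnEquiv_of_conjugate_eq_one (h := d ^ (-(1 / 2) : ℝ))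
    hr hxr (.of_nonneg rpow_nonneg) ((commute_star_mul_self_add_one_sub hr hxr).cfc_nnreal _)
    ((Commute.refl d).cfc_nnreal _) (conjugate_rpow_neg_one_half d)
  exact ⟨_, hs, hrs, hsx, fun s₁ hs₁ => by simp only [← mul_assoc, hs₁]⟩

end CStarAlgebra

/-- If `a` is left invertible up to `p` and `r ≤ 1-p` is a projection, then
there is a projection `s ∼ r` with `s (a r) = a r`, minimal with this
property. -/
theorem exists_minimal_range_projection
    {A : Type*} [NormedRing A] [StarRing A] [CStarRing A] [CompleteSpace A]
    [NormedAlgebra ℂ A] [StarModule ℂ A]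
    (a p r : A) (hp : IsProjection p) (hr : IsProjection r)
    (hleft : ∃ b : A, b * (a * (1 - p)) = 1 - p)
    (hrp : r * (1 - p) = r) :
    ∃ s : A, IsProjection s ∧ MvNEquiv r s ∧ s * (a * r) = a * r ∧
      ∀ s₁ : A, IsProjection s₁ → s₁ * (a * r) = a * r → s₁ * s = s := by
  let : CStarAlgebra A := { }
  obtain ⟨b, hb⟩ := hleft
  have hpr : (1 - p) * r = r := by
    simpa [star_mul, hp.1, hr.1] using congr(star $hrp)
  have hcx : r * b * (a * r) = r := calc
    r * b * (a * r) = r * b * (a * ((1 - p) * r)) := by rw [hpr]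
    _ = r * (b * (a * (1 - p))) * r := by simp only [mul_assoc]
    _ = r := by rw [hb, hrp, hr.2]
  obtain ⟨s, hs, hrs, hsx, hmin⟩ := exists_minimal_mvnEquiv_of_mul_eq
    (isProjection_iff_isStarProjection.mp hr) hcx (by rw [mul_assoc, hr.2])
  exact ⟨s, isProjection_iff_isStarProjection.mpr hs, hrs, hsx, fun s₁ _ => hmin s₁⟩
end

section
/- Let A be a unital C*-algebra and let a be invertible up to (p,q) where p, q are projections. Then there exists a projection q' ∈ A, Murray–von Neumann equivalent to q, such that a is invertible up to (p, q') and q' a (1-p) = 0. -/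
theorem isIdempotentElem_of_mul_eq_of_mul_eq {R : Type*} [Ring R] {e y : R} (hey : e * y = e)
    (hye : y * e = y) : IsIdempotentElem e := by
  rw [IsIdempotentElem]; nth_rw 1 [← hey]; rw [mul_assoc, hye, hey]

def complIdempotent {R : Type*} [Ring R] (a p b : R) : R := 1 - a * (1 - p) * b

namespace IsPQInv

variable {R : Type*} [Ring R] {a p q b : R}

theorem mul_one_sub_right (hq : IsIdempotentElem q) (hb : IsPQInv a p q b) :
    b * (1 - q) = b := by
  rw [hb.1, mul_assoc _ (1 - q), hq.one_sub.eq]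

theorem one_sub_mul_left (hp : IsIdempotentElem p) (hb : IsPQInv a p q b) :
    (1 - p) * b = b := by
  rw [hb.1, ← mul_assoc, ← mul_assoc, hp.one_sub.eq]

theorem mul_mul_one_sub (hq : IsIdempotentElem q) (hb : IsPQInv a p q b) :
    b * (a * (1 - p)) = 1 - p := by
  calc b * (a * (1 - p)) = b * (1 - q) * (a * (1 - p)) := by rw [hb.mul_one_sub_right hq]
    _ = b * ((1 - q) * a * (1 - p)) := by simp only [mul_assoc]
    _ = 1 - p := hb.2.2

theorem mul_complIdempotent (hb : IsPQInv a p q b) :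
    q * complIdempotent a p b = complIdempotent a p b := by
  have h : (1 - q) * complIdempotent a p b = 0 := by
    rw [complIdempotent, mul_sub, mul_one]; simp only [← mul_assoc]; rw [hb.2.1, sub_self]
  calc q * complIdempotent a p b
      = complIdempotent a p b - (1 - q) * complIdempotent a p b := by noncomm_ring
    _ = complIdempotent a p b := by rw [h, sub_zero]

theorem complIdempotent_mul (hq : IsIdempotentElem q) (hb : IsPQInv a p q b) :
    complIdempotent a p b * q = q := by
  have h : b * q = 0 := by
    rw [← hb.mul_one_sub_right hq, mul_assoc, sub_mul, one_mul, hq.eq, sub_self, mul_zero]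
  rw [complIdempotent, sub_mul, one_mul, mul_assoc, h, mul_zero, sub_zero]

theorem complIdempotent_mul_mul_one_sub (hp : IsIdempotentElem p) (hq : IsIdempotentElem q)
    (hb : IsPQInv a p q b) : complIdempotent a p b * (a * (1 - p)) = 0 := by
  rw [complIdempotent, sub_mul, one_mul, mul_assoc, hb.mul_mul_one_sub hq, mul_assoc,
    hp.one_sub.eq, sub_self]

theorem mul_mul_one_sub_eq_zero_of_mul_complIdempotent (hp : IsIdempotentElem p)
    (hq : IsIdempotentElem q) (hb : IsPQInv a p q b) {q' : R}
    (hq'y : q' * complIdempotent a p b = q') : q' * a * (1 - p) = 0 := by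
  calc q' * a * (1 - p) = q' * (complIdempotent a p b * (a * (1 - p))) := by
        rw [← mul_assoc, hq'y, mul_assoc]
    _ = 0 := by rw [hb.complIdempotent_mul_mul_one_sub hp hq, mul_zero]

theorem mul_one_sub_of_mul_complIdempotent (hp : IsIdempotentElem p) (hq : IsIdempotentElem q)
    (hb : IsPQInv a p q b) {q' : R} (hq'y : q' * complIdempotent a p b = q')
    (hyq' : complIdempotent a p b * q' = complIdempotent a p b) :
    IsPQInv a p q' (b * (1 - q')) := by
  have hq' := isIdempotentElem_of_mul_eq_of_mul_eq hq'y hyq'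
  have hq'ae := hb.mul_mul_one_sub_eq_zero_of_mul_complIdempotent hp hq hq'y
  have hae : (1 - q') * a * (1 - p) = a * (1 - p) := by
    rw [sub_mul, sub_mul, one_mul, hq'ae, sub_zero]
  refine ⟨?_, ?_, ?_⟩
  · rw [← mul_assoc, hb.one_sub_mul_left hp, mul_assoc, hq'.one_sub.eq]
  · calc (1 - q') * a * (1 - p) * (b * (1 - q'))
        = (1 - complIdempotent a p b) * (1 - q') := by rw [hae, complIdempotent]; noncomm_ring
      _ = 1 - q' := by rw [sub_mul, one_mul, mul_sub, mul_one, hyq', sub_self, sub_zero]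
  · rw [hae, mul_assoc, sub_mul, one_mul, ← mul_assoc q', hq'ae, sub_zero, hb.mul_mul_one_sub hq]

end IsPQInv

open CFC in
theorem exists_mul_star_eq_and_star_mul_same_kernel {A : Type*} [CStarAlgebra A] {q y : A}
    (hq : IsSelfAdjoint q) (hqy : q * y = y) (hyq : y * q = q) :
    ∃ v : A, v * star v = q ∧ star v * v * y = star v * v ∧ y * (star v * v) = y := by
  let := CStarAlgebra.spectralOrder A
  have := CStarAlgebra.spectralOrderedRing A
  have hqq : q * q = q := by nth_rw 2 [← hyq]; rw [← mul_assoc, hqy, hyq]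
  have hy : y * y = y := by nth_rw 2 [← hqy]; rw [← mul_assoc, hyq, hqy]
  have hqys : q * star y = q := by rw [← hq.star_eq, ← star_mul, hyq]
  have hysq : star y * q = star y := by rw [← hq.star_eq, ← star_mul, hqy]
  set t := 1 + (y - q) * star (y - q) with ht
  have htq : t * q = y * star y := by
    simp only [ht, star_sub, hq.star_eq, add_mul, sub_mul, mul_sub, mul_assoc, hysq, hqq, hqys,
      hyq, one_mul]
    abel
  have hqt : q * t = y * star y := by
    simp only [ht, star_sub, hq.star_eq, mul_add, sub_mul, mul_sub, ← mul_assoc, hqy, hqq, hqys,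
      hyq, mul_one]
    abel
  have ht_pos : IsStrictlyPositive t := isStrictlyPositive_one.add_nonneg (mul_star_self_nonneg _)
  set g := t ^ (-(1 / 2) : ℝ) with hg
  have hg_sa : IsSelfAdjoint g := (rpow_nonneg (a := t)).isSelfAdjoint
  have hgq : Commute g q := by
    rw [hg, rpow_def]; exact Commute.cfc_nnreal (by rw [Commute, SemiconjBy, htq, hqt]) _
  have hgt : Commute g t := by
    rw [hg, rpow_def]; exact Commute.cfc_nnreal (Commute.refl t) _
  have hgtg : g * t * g = 1 := conjugate_rpow_neg_one_half t
  refine ⟨g * y, ?_, ?_, ?_⟩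
  · calc g * y * star (g * y) = g * (q * t) * g := by
          rw [star_mul, hg_sa.star_eq, hqt]; noncomm_ring
      _ = q * (g * t * g) := by rw [← mul_assoc, hgq.eq]; simp only [mul_assoc]
      _ = q := by rw [hgtg, mul_one]
  · rw [star_mul, hg_sa.star_eq]; simp only [mul_assoc, hy]
  · calc y * (star (g * y) * (g * y)) = y * star y * g * g * y := by
          rw [star_mul, hg_sa.star_eq]; noncomm_ring
      _ = q * (t * g) * g * y := by rw [← hqt]; noncomm_ring
      _ = q * (g * t * g) * y := by rw [← hgt.eq]; noncomm_ring
      _ = y := by rw [hgtg, mul_one, hqy]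

/-- Triangularization: if `a` is invertible up to `(p,q)`, there is a projection
`q' ∼ q` such that `a` is invertible up to `(p,q')` and `q' a (1-p) = 0`. -/
theorem triangularization_left
    {A : Type*} [NormedRing A] [StarRing A] [CStarRing A] [CompleteSpace A]
    [NormedAlgebra ℂ A] [StarModule ℂ A]
    (a p q : A) (hp : IsProjection p) (hq : IsProjection q)
    (h : InvUpTo a p q) :
    ∃ q' : A, IsProjection q' ∧ (∃ v : A, v * star v = q ∧ star v * v = q') ∧
      InvUpTo a p q' ∧ q' * a * (1 - p) = 0 := by
  obtain ⟨b, hb⟩ := h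
  let : CStarAlgebra A := {}
  obtain ⟨v, hvq, hq'y, hyq'⟩ := exists_mul_star_eq_and_star_mul_same_kernel hq.1
    hb.mul_complIdempotent (hb.complIdempotent_mul hq.2)
  have hq' : IsProjection (star v * v) :=
    ⟨by rw [star_mul, star_star], isIdempotentElem_of_mul_eq_of_mul_eq hq'y hyq'⟩
  refine ⟨star v * v, hq', ⟨v, hvq, rfl⟩,
    ⟨_, hb.mul_one_sub_of_mul_complIdempotent hp.2 hq.2 hq'y hyq'⟩,
    hb.mul_mul_one_sub_eq_zero_of_mul_complIdempotent hp.2 hq.2 hq'y⟩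
end

section
/- Let A be a unital C*-algebra and a invertible up to (p,q) for projections p, q. Then there exists a projection p' ∈ A equivalent to p such that a is invertible up to (p', q) and (1-q) a p' = 0. -/
section Ring

variable {A : Type*} [Ring A] {a b p q E : A}

def kernelIdempotent (a q b : A) : A := 1 - b * ((1 - q) * a)

namespace IsPQInv

lemma left_mul_eq_zero (hb : IsPQInv a p q b) (hp : IsIdempotentElem p) : p * b = 0 := by
  calc p * b = (p - p * p) * (b * (1 - q)) := by nth_rw 1 [hb.1]; noncomm_ring
    _ = 0 := by rw [hp.eq, sub_self, zero_mul]

lemma compl_mul_mul_eq (hb : IsPQInv a p q b) (hp : IsIdempotentElem p) :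
    (1 - q) * a * b = 1 - q := by
  calc (1 - q) * a * b = (1 - q) * a * (1 - p) * b + (1 - q) * a * (p * b) := by noncomm_ring
    _ = 1 - q := by rw [hb.2.1, hb.left_mul_eq_zero hp, mul_zero, add_zero]

lemma kernelIdempotent_mul (hb : IsPQInv a p q b) :
    kernelIdempotent a q b * p = kernelIdempotent a q b := by
  calc kernelIdempotent a q b * p
      = 1 - b * ((1 - q) * a) - (1 - p - b * ((1 - q) * a * (1 - p))) := by
        rw [kernelIdempotent]; noncomm_ring
    _ = kernelIdempotent a q b := by rw [hb.2.2, sub_self, sub_zero, kernelIdempotent]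

lemma mul_kernelIdempotent (hb : IsPQInv a p q b) (hp : IsIdempotentElem p) :
    p * kernelIdempotent a q b = p := by
  calc p * kernelIdempotent a q b = p - p * b * ((1 - q) * a) := by
        rw [kernelIdempotent]; noncomm_ring
    _ = p := by rw [hb.left_mul_eq_zero hp, zero_mul, sub_zero]

lemma compl_mul_mul_kernelIdempotent (hb : IsPQInv a p q b) (hp : IsIdempotentElem p)
    (hq : IsIdempotentElem q) : (1 - q) * a * kernelIdempotent a q b = 0 := by
  calc (1 - q) * a * kernelIdempotent a q b = (1 - q) * a - (1 - q) * a * b * ((1 - q) * a) := by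
        rw [kernelIdempotent]; noncomm_ring
    _ = (q - q * q) * a := by rw [hb.compl_mul_mul_eq hp]; noncomm_ring
    _ = 0 := by rw [hq.eq, sub_self, zero_mul]

lemma of_range (hb : IsPQInv a p q b) (hp : IsIdempotentElem p) (hq : IsIdempotentElem q)
    (heE : kernelIdempotent a q b * E = E)
    (hEe : E * kernelIdempotent a q b = kernelIdempotent a q b) :
    IsPQInv a E q ((1 - E) * b * (1 - q)) := by
  set e := kernelIdempotent a q b
  have hE : IsIdempotentElem E := by
    rw [IsIdempotentElem]; nth_rw 2 [← heE]; rw [← mul_assoc, hEe, heE]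
  have hE' := hE.one_sub
  have hq' := hq.one_sub
  have hcE : (1 - q) * a * (1 - E) = (1 - q) * a := by
    rw [mul_sub, mul_one, ← heE, ← mul_assoc, hb.compl_mul_mul_kernelIdempotent hp hq, zero_mul,
      sub_zero]
  have hbc : b * ((1 - q) * a) = 1 - e := (sub_sub_cancel 1 _).symm
  refine ⟨?_, ?_, ?_⟩
  · calc (1 - E) * b * (1 - q) = (1 - E) * (1 - E) * b * ((1 - q) * (1 - q)) := by
          rw [hE'.eq, hq'.eq]
      _ = (1 - E) * ((1 - E) * b * (1 - q)) * (1 - q) := by noncomm_ring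
  · calc (1 - q) * a * (1 - E) * ((1 - E) * b * (1 - q))
        = (1 - q) * a * ((1 - E) * (1 - E)) * b * (1 - q) := by noncomm_ring
      _ = (1 - q) * (1 - q) := by rw [hE'.eq, hcE, hb.compl_mul_mul_eq hp]
      _ = 1 - q := hq'.eq
  · calc (1 - E) * b * (1 - q) * ((1 - q) * a * (1 - E))
        = (1 - E) * (b * ((1 - q) * (1 - q) * a)) * (1 - E) := by noncomm_ring
      _ = (1 - E - e + E * e) * (1 - E) := by rw [hq'.eq, hbc]; noncomm_ring
      _ = 1 - E := by rw [hEe, sub_add_cancel, hE'.eq]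

end IsPQInv

end Ring

section StarRing

variable {A : Type*} [Ring A] [StarRing A] {e p : A}

lemma star_mul_self_eq_and_commute_of_mul_eq (hp : IsStarProjection p) (hep : e * p = e)
    (hpe : p * e = p) :
    star e * e = (1 + star (e - p) * (e - p)) * p ∧ Commute p (1 + star (e - p) * (e - p)) := by
  have hpz : p * (e - p) = 0 := by rw [mul_sub, hpe, hp.isIdempotentElem.eq, sub_self]
  have hzp : (e - p) * p = e - p := by rw [sub_mul, hep, hp.isIdempotentElem.eq]
  have hpz' : p * star (e - p) = star (e - p) := by
    calc p * star (e - p) = star ((e - p) * p) := by rw [star_mul, hp.isSelfAdjoint.star_eq]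
      _ = star (e - p) := by rw [hzp]
  have hzp' : star (e - p) * p = 0 := by
    calc star (e - p) * p = star (p * (e - p)) := by rw [star_mul, hp.isSelfAdjoint.star_eq]
      _ = 0 := by rw [hpz, star_zero]
  refine ⟨?_, ?_⟩
  · calc star e * e = star (p + (e - p)) * (p + (e - p)) := by rw [add_sub_cancel]
      _ = (p + star (e - p)) * (p + (e - p)) := by rw [star_add, hp.isSelfAdjoint.star_eq]
      _ = p * p + p * (e - p) + star (e - p) * p + star (e - p) * (e - p) := by noncomm_ring
      _ = (1 + star (e - p) * (e - p)) * p := by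
          rw [hp.isIdempotentElem.eq, hpz, hzp', add_mul, one_mul, mul_assoc, hzp, add_zero,
            add_zero]
  · refine (Commute.one_right p).add_right ?_
    rw [Commute, SemiconjBy, ← mul_assoc, hpz', mul_assoc, hzp]

end StarRing

section CStarAlgebra

variable {A : Type*} [CStarAlgebra A]

theorem exists_isStarProjection_equiv_range_of_mul_eq {e p : A} (hp : IsStarProjection p)
    (hep : e * p = e) (hpe : p * e = p) :
    ∃ E v : A, IsStarProjection E ∧ e * E = E ∧ E * e = e ∧ v * star v = p ∧ star v * v = E := by
  let _ := CStarAlgebra.spectralOrder A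
  have _ := CStarAlgebra.spectralOrderedRing A
  have hp' : star p = p := hp.isSelfAdjoint.star_eq
  have he : e * e = e := by nth_rw 1 [← hep]; rw [mul_assoc, hpe, hep]
  obtain ⟨hee, hph⟩ := star_mul_self_eq_and_commute_of_mul_eq hp hep hpe
  set h := 1 + star (e - p) * (e - p)
  have hh : IsStrictlyPositive h := isStrictlyPositive_one.add_nonneg (star_mul_self_nonneg _)
  set s := h ^ (-(1 / 2) : ℝ)
  have hs : star s = s := CFC.rpow_nonneg.isSelfAdjoint.star_eq
  have hshs : s * h * s = 1 := CFC.conjugate_rpow_neg_one_half h hh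
  have hssh : s * s * h = 1 := by
    have hsh : Commute s h := (Commute.refl h).cfc_nnreal _
    rw [mul_assoc, hsh.eq, ← mul_assoc, hshs]
  have hps : Commute p s := (hph.symm.cfc_nnreal _).symm
  obtain ⟨v, hv⟩ : ∃ v, v = s * star e := ⟨_, rfl⟩
  have hpv : p * v = v := by rw [hv, ← mul_assoc, hps.eq, mul_assoc, ← hp', ← star_mul, hep]
  have hvp : star v * p = star v := by rw [← hp', ← star_mul, hpv]
  have hvv : v * star v = p := by
    calc v * star v = s * (h * p) * s := by rw [hv, star_mul, star_star, hs, ← hee]; noncomm_ring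
      _ = s * h * s * p := by rw [← mul_assoc, mul_assoc _ p, hps.eq, ← mul_assoc]
      _ = p := by rw [hshs, one_mul]
  have hE : star v * v = e * s * s * star e := by rw [hv, star_mul, star_star, hs]; noncomm_ring
  refine ⟨star v * v, v, ⟨?_, .star_mul_self v⟩, ?_, ?_, hvv, rfl⟩
  · calc star v * v * (star v * v) = star v * (v * star v) * v := by noncomm_ring
      _ = star v * v := by rw [hvv, hvp]
  · calc e * (star v * v) = e * e * s * s * star e := by rw [hE]; noncomm_ring
      _ = star v * v := by rw [he, hE]
  · calc star v * v * e = e * s * s * (star e * e) := by rw [hE]; noncomm_ring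
      _ = e * (s * s * h) * p := by rw [hee]; noncomm_ring
      _ = e := by rw [hssh, mul_one, hep]

end CStarAlgebra

/-- Triangularization: if `a` is invertible up to `(p,q)`, there is a projection
`p' ∼ p` such that `a` is invertible up to `(p',q)` and `(1-q) a p' = 0`. -/
theorem triangularization_right
    {A : Type*} [NormedRing A] [StarRing A] [CStarRing A] [CompleteSpace A]
    [NormedAlgebra ℂ A] [StarModule ℂ A]
    (a p q : A) (hp : IsProjection p) (hq : IsProjection q)
    (h : InvUpTo a p q) :
    ∃ p' : A, IsProjection p' ∧ (∃ v : A, v * star v = p ∧ star v * v = p') ∧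
      InvUpTo a p' q ∧ (1 - q) * a * p' = 0 := by
  let _ : CStarAlgebra A := { ‹NormedRing A›, ‹StarRing A›, ‹CStarRing A›, ‹CompleteSpace A›,
    ‹NormedAlgebra ℂ A›, ‹StarModule ℂ A› with }
  obtain ⟨b, hb⟩ := h
  obtain ⟨E, v, hE, heE, hEe, hvp, hvE⟩ := exists_isStarProjection_equiv_range_of_mul_eq
    ⟨hp.2, hp.1⟩ hb.kernelIdempotent_mul (hb.mul_kernelIdempotent hp.2)
  refine ⟨E, ⟨hE.isSelfAdjoint, hE.isIdempotentElem⟩, ⟨v, hvp, hvE⟩,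
    ⟨_, hb.of_range hp.2 hq.2 heE hEe⟩, ?_⟩
  rw [← heE, ← mul_assoc, hb.compl_mul_mul_kernelIdempotent hp.2 hq.2, zero_mul]
end
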